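/- Monotonicity of the LMC–Rényi complexity under differential-escort transformations (Theorem 1): let ρ be a probability density, let p < q with p, q ≠ 1, and for α ∈ ℝ set p_α = 1+α(p−1), q_α = 1+α(q−1) and G(α) = (α/(1−p_α)) log W_{p_α}[ρ] − (α/(1−q_α)) log W_{q_α}[ρ] (so that exp(G(α)) = C_{p,q}[ρ_α], the LMC–Rényi complexity of the differential-escort density ρ_α). Then on the set of α > 0 where W_{p_α}[ρ] and W_{q_α}[ρ] are finite and positive (and p_α, q_α ≠ 1), G is nonnegative and nondecreasing; symmetrically, on the set of α < 0 where these moments are finite and positive, G is nonnegative and nonincreasing. Consequently C_{p,q}[ρ_{α'}] ≥ C_{p,q}[ρ_α] ≥ 1 whenever α' ≥ α > 0 or α' ≤ α < 0. -/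

import Mathlib

/-!
The entropic moments `s ↦ W_s = ∫ ρ ^ s` are log-convex by Hölder's inequality, and
`log W_1 = 0`. With `a = p - 1 < b = q - 1`,
`log C_{p,q}[ρ_α] = log W_{1+αb} / b - log W_{1+αa} / a`, so its increment between `α` and `α'`
is `(α' - α)` times the difference of the secant slopes of `log W` over `[1 + αa, 1 + α'a]` and
`[1 + αb, 1 + α'b]`. For `α, α' ≥ 0` both endpoints of the second interval lie to the right of
those of the first, so convexity makes this difference nonnegative; `α = 0` gives `C = 1`.
Negative `α` reduces to positive ones through `(a, b, α) ↦ (-b, -a, -α)`.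
-/

open MeasureTheory Set

section MomentLogConvexity

variable {X : Type*} [MeasurableSpace X] {μ : Measure X} {f : X → ℝ}

theorem lintegral_ofReal_rpow_convexComb_le (hfm : AEMeasurable f μ) (hf : ∀ᵐ x ∂μ, 0 < f x)
    {a b : ℝ} (ha : 0 ≤ a) (hb : 0 ≤ b) (hab : a + b = 1) (u w : ℝ) :
    ∫⁻ x, ENNReal.ofReal (f x ^ (a * u + b * w)) ∂μ ≤
      (∫⁻ x, ENNReal.ofReal (f x ^ u) ∂μ) ^ a *
        (∫⁻ x, ENNReal.ofReal (f x ^ w) ∂μ) ^ b :=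
  calc ∫⁻ x, ENNReal.ofReal (f x ^ (a * u + b * w)) ∂μ
      = ∫⁻ x, ENNReal.ofReal (f x ^ u) ^ a * ENNReal.ofReal (f x ^ w) ^ b ∂μ := by
        refine lintegral_congr_ae (hf.mono fun x hx => ?_)
        dsimp only
        rw [ENNReal.ofReal_rpow_of_pos (by positivity), ENNReal.ofReal_rpow_of_pos (by positivity),
          ← ENNReal.ofReal_mul (by positivity), ← Real.rpow_mul hx.le, ← Real.rpow_mul hx.le,
          ← Real.rpow_add hx, mul_comm u, mul_comm w]
    _ ≤ _ := ENNReal.lintegral_mul_norm_pow_le (hfm.pow_const u).ennreal_ofReal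
        (hfm.pow_const w).ennreal_ofReal ha hb hab

theorem Integrable.rpow_convexComb (hfm : AEMeasurable f μ) (hf : ∀ᵐ x ∂μ, 0 < f x)
    {a b u w : ℝ} (ha : 0 ≤ a) (hb : 0 ≤ b) (hab : a + b = 1)
    (hu : Integrable (fun x => f x ^ u) μ) (hw : Integrable (fun x => f x ^ w) μ) :
    Integrable (fun x => f x ^ (a * u + b * w)) μ := by
  refine ⟨(hfm.pow_const _).aestronglyMeasurable, ?_⟩
  rw [hasFiniteIntegral_iff_ofReal (hf.mono fun x hx => by positivity)]
  exact (lintegral_ofReal_rpow_convexComb_le hfm hf ha hb hab u w).trans_lt <|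
    ENNReal.mul_lt_top (ENNReal.rpow_lt_top_of_nonneg ha hu.lintegral_lt_top.ne)
      (ENNReal.rpow_lt_top_of_nonneg hb hw.lintegral_lt_top.ne)

theorem integral_rpow_convexComb_le (hfm : AEMeasurable f μ) (hf : ∀ᵐ x ∂μ, 0 < f x)
    {a b u w : ℝ} (ha : 0 ≤ a) (hb : 0 ≤ b) (hab : a + b = 1)
    (hu : Integrable (fun x => f x ^ u) μ) (hw : Integrable (fun x => f x ^ w) μ) :
    ∫ x, f x ^ (a * u + b * w) ∂μ ≤ (∫ x, f x ^ u ∂μ) ^ a * (∫ x, f x ^ w ∂μ) ^ b := by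
  have toReal_lintegral :
      ∀ s : ℝ, ∫ x, f x ^ s ∂μ = (∫⁻ x, ENNReal.ofReal (f x ^ s) ∂μ).toReal :=
    fun s => integral_eq_lintegral_of_nonneg_ae (hf.mono fun x hx => by positivity)
      (hfm.pow_const s).aestronglyMeasurable
  rw [toReal_lintegral, toReal_lintegral, toReal_lintegral, ENNReal.toReal_rpow,
    ENNReal.toReal_rpow, ← ENNReal.toReal_mul]
  exact ENNReal.toReal_mono (ENNReal.mul_ne_top
    (ENNReal.rpow_ne_top_of_nonneg ha hu.lintegral_lt_top.ne)
    (ENNReal.rpow_ne_top_of_nonneg hb hw.lintegral_lt_top.ne))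
    (lintegral_ofReal_rpow_convexComb_le hfm hf ha hb hab u w)

theorem integral_rpow_pos [NeZero μ] (hf : ∀ᵐ x ∂μ, 0 < f x) {s : ℝ}
    (hs : Integrable (fun x => f x ^ s) μ) : 0 < ∫ x, f x ^ s ∂μ := by
  have hsupp : Function.support (fun x => f x ^ s) =ᵐ[μ] univ :=
    ae_eq_univ.2 <| measure_mono_null (fun x hx => by simpa using hx)
      (ae_iff.1 (hf.mono fun x hx => (Real.rpow_pos_of_pos hx s).ne'))
  rw [integral_pos_iff_support_of_nonneg_ae (hf.mono fun x hx => by positivity) hs,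
    measure_congr hsupp]
  exact Measure.measure_univ_pos.2 (NeZero.ne μ)

theorem convex_setOf_integrable_rpow (hfm : AEMeasurable f μ) (hf : ∀ᵐ x ∂μ, 0 < f x) :
    Convex ℝ {s : ℝ | Integrable (fun x => f x ^ s) μ} :=
  convex_iff_forall_pos.2 fun _ hu _ hw _ _ ha hb hab =>
    Integrable.rpow_convexComb hfm hf ha.le hb.le hab hu hw

theorem convexOn_log_integral_rpow [NeZero μ] (hfm : AEMeasurable f μ)
    (hf : ∀ᵐ x ∂μ, 0 < f x) :
    ConvexOn ℝ {s : ℝ | Integrable (fun x => f x ^ s) μ}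
      (fun s => Real.log (∫ x, f x ^ s ∂μ)) := by
  refine convexOn_iff_forall_pos.2 ⟨convex_setOf_integrable_rpow hfm hf,
    fun u hu w hw a b ha hb hab => ?_⟩
  have hWu := integral_rpow_pos hf hu
  have hWw := integral_rpow_pos hf hw
  simp only [smul_eq_mul]
  rw [← Real.log_rpow hWu, ← Real.log_rpow hWw, ← Real.log_mul (by positivity) (by positivity)]
  have hWv := integral_rpow_pos hf (Integrable.rpow_convexComb hfm hf ha.le hb.le hab hu hw)
  exact Real.log_le_log hWv (integral_rpow_convexComb_le hfm hf ha.le hb.le hab hu hw)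

end MomentLogConvexity

theorem ConvexOn.slope_le_slope_of_le_of_le {𝕜 : Type*} [Field 𝕜] [LinearOrder 𝕜]
    [IsStrictOrderedRing 𝕜] {s : Set 𝕜} {f : 𝕜 → 𝕜} (hf : ConvexOn 𝕜 s f)
    {x₁ x₂ y₁ y₂ : 𝕜} (hx₁ : x₁ ∈ s) (hx₂ : x₂ ∈ s) (hy₁ : y₁ ∈ s) (hy₂ : y₂ ∈ s)
    (hx : x₁ ≠ x₂) (hy : y₁ ≠ y₂) (h₁ : x₁ ≤ y₁) (h₂ : x₂ ≤ y₂) :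
    slope f x₁ x₂ ≤ slope f y₁ y₂ := by
  by_cases hxy : x₂ = y₁
  · -- then `x₁ ≠ y₂`, so pass through `slope f x₁ y₂` instead of `slope f y₁ x₂`
    have hyx : x₁ ≠ y₂ := fun h => hx (le_antisymm (h₁.trans_eq hxy.symm) (h ▸ h₂))
    calc slope f x₁ x₂
        ≤ slope f x₁ y₂ := hf.slope_mono hx₁ ⟨hx₂, hx.symm⟩ ⟨hy₂, hyx.symm⟩ h₂
      _ = slope f y₂ x₁ := slope_comm f x₁ y₂
      _ ≤ slope f y₂ y₁ := hf.slope_mono hy₂ ⟨hx₁, hyx⟩ ⟨hy₁, hy⟩ h₁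
      _ = slope f y₁ y₂ := slope_comm f y₂ y₁
  · calc slope f x₁ x₂ = slope f x₂ x₁ := slope_comm f x₁ x₂
      _ ≤ slope f x₂ y₁ := hf.slope_mono hx₂ ⟨hx₁, hx⟩ ⟨hy₁, Ne.symm hxy⟩ h₁
      _ = slope f y₁ x₂ := slope_comm f x₂ y₁
      _ ≤ slope f y₁ y₂ := hf.slope_mono hy₁ ⟨hx₂, hxy⟩ ⟨hy₂, hy.symm⟩ h₂

/-- For `F = log W` with `W s = ∫ ρ ^ s`, and `a = p - 1`, `b = q - 1`, this is
`log C_{p,q}[ρ_α]`, because `W_s[ρ_α] = W_{1 + α (s - 1)}[ρ]`. -/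
noncomputable def escortLogComplexity (F : ℝ → ℝ) (a b α : ℝ) : ℝ :=
  F (1 + α * b) / b - F (1 + α * a) / a

theorem escortLogComplexity_sub_eq {F : ℝ → ℝ} {a b α α' : ℝ} (ha : a ≠ 0) (hb : b ≠ 0)
    (hα : α ≠ α') :
    escortLogComplexity F a b α' - escortLogComplexity F a b α =
      (α' - α) * (slope F (1 + α * b) (1 + α' * b) - slope F (1 + α * a) (1 + α' * a)) := by
  have hα' : α' - α ≠ 0 := sub_ne_zero.2 hα.symm
  simp only [escortLogComplexity, slope_def_field]
  rw [show 1 + α' * b - (1 + α * b) = (α' - α) * b by ring,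
    show 1 + α' * a - (1 + α * a) = (α' - α) * a by ring]
  field_simp
  ring

theorem escortLogComplexity_neg (F : ℝ → ℝ) (a b α : ℝ) :
    escortLogComplexity F a b (-α) = escortLogComplexity F (-b) (-a) α := by
  simp only [escortLogComplexity, neg_mul, mul_neg, div_neg]
  ring

theorem escortLogComplexity_eq {F : ℝ → ℝ} {a b : ℝ} (ha : a ≠ 0) (hb : b ≠ 0) (hF : F 1 = 0)
    (α : ℝ) :
    escortLogComplexity F a b α =
      α / (1 - (1 + α * a)) * F (1 + α * a) - α / (1 - (1 + α * b)) * F (1 + α * b) := by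
  rcases eq_or_ne α 0 with rfl | hα
  · simp [escortLogComplexity, hF]
  rw [escortLogComplexity, sub_add_cancel_left, sub_add_cancel_left]
  field_simp
  ring

theorem ConvexOn.monotoneOn_escortLogComplexity {F : ℝ → ℝ} {s : Set ℝ} (hF : ConvexOn ℝ s F)
    {a b : ℝ} (hab : a < b) (ha : a ≠ 0) (hb : b ≠ 0) :
    MonotoneOn (escortLogComplexity F a b) {α | 0 ≤ α ∧ 1 + α * a ∈ s ∧ 1 + α * b ∈ s} := by
  rintro α ⟨hα, hαa, hαb⟩ α' ⟨-, hα'a, hα'b⟩ hle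
  rcases hle.eq_or_lt with rfl | hlt
  · rfl
  rw [← sub_nonneg, escortLogComplexity_sub_eq ha hb hlt.ne]
  refine mul_nonneg (sub_nonneg.2 hlt.le) (sub_nonneg.2 ?_)
  have hα' : 0 ≤ α' := hα.trans hlt.le
  exact hF.slope_le_slope_of_le_of_le hαa hα'a hαb hα'b
    (fun h => hlt.ne (mul_right_cancel₀ ha (by linarith)))
    (fun h => hlt.ne (mul_right_cancel₀ hb (by linarith)))
    (by gcongr) (by gcongr)

theorem ConvexOn.antitoneOn_escortLogComplexity {F : ℝ → ℝ} {s : Set ℝ} (hF : ConvexOn ℝ s F)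
    {a b : ℝ} (hab : a < b) (ha : a ≠ 0) (hb : b ≠ 0) :
    AntitoneOn (escortLogComplexity F a b) {α | α ≤ 0 ∧ 1 + α * a ∈ s ∧ 1 + α * b ∈ s} := by
  rintro α ⟨hα, hαa, hαb⟩ α' ⟨hα', hα'a, hα'b⟩ hle
  have key := hF.monotoneOn_escortLogComplexity (neg_lt_neg hab) (neg_ne_zero.2 hb)
    (neg_ne_zero.2 ha)
    ⟨neg_nonneg.2 hα', by simpa only [neg_mul_neg], by simpa only [neg_mul_neg]⟩
    ⟨neg_nonneg.2 hα, by simpa only [neg_mul_neg], by simpa only [neg_mul_neg]⟩ (neg_le_neg hle)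
  rwa [← escortLogComplexity_neg, ← escortLogComplexity_neg, neg_neg, neg_neg] at key

/-- **Monotonicity of the LMC–Rényi complexity under differential-escort transformations**
(Theorem 1): for a probability density `ρ` and `p < q` (`p, q ≠ 1`), set
`p_α = 1+α(p-1)`, `q_α = 1+α(q-1)` and
`G(α) = (α/(1-p_α)) log W_{p_α}[ρ] − (α/(1-q_α)) log W_{q_α}[ρ]`, so that
`exp(G(α)) = C_{p,q}[ρ_α]`.  On the set of `α > 0` where `W_{p_α}[ρ], W_{q_α}[ρ]` are
finite and positive (and `p_α, q_α ≠ 1`), `G` is nonnegative and nondecreasing; on the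
set of `α < 0` where these moments are finite and positive, `G` is nonnegative and
nonincreasing.  Hence `C_{p,q}[ρ_{α'}] ≥ C_{p,q}[ρ_α] ≥ 1` for `α' ≥ α > 0` or
`α' ≤ α < 0`. -/
theorem lmc_renyi_monotonicity (ρ : ℝ → ℝ) (hmeas : Measurable ρ)
    (hnn : ∀ x, 0 ≤ ρ x) (htot : (∫ x, ρ x) = 1)
    (p q : ℝ) (hpq : p < q) (hp : p ≠ 1) (hq : q ≠ 1)
    (W : ℝ → ℝ) (hW : ∀ s, W s = ∫ x in Function.support ρ, ρ x ^ s)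
    (G : ℝ → ℝ)
    (hG : ∀ α, G α = (α / (1 - (1 + α * (p - 1)))) * Real.log (W (1 + α * (p - 1)))
        - (α / (1 - (1 + α * (q - 1)))) * Real.log (W (1 + α * (q - 1))))
    (S : Set ℝ)
    (hS : S = {α : ℝ | IntegrableOn (fun x => ρ x ^ (1 + α * (p - 1))) (Function.support ρ)
        ∧ 0 < W (1 + α * (p - 1))
        ∧ IntegrableOn (fun x => ρ x ^ (1 + α * (q - 1))) (Function.support ρ)
        ∧ 0 < W (1 + α * (q - 1))
        ∧ 1 + α * (p - 1) ≠ 1 ∧ 1 + α * (q - 1) ≠ 1}) :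
    (∀ α ∈ S, 0 < α → 0 ≤ G α)
    ∧ (∀ α ∈ S, ∀ α' ∈ S, 0 < α → α ≤ α' → G α ≤ G α')
    ∧ (∀ α ∈ S, α < 0 → 0 ≤ G α)
    ∧ (∀ α ∈ S, ∀ α' ∈ S, α < 0 → α' ≤ α → G α ≤ G α') := by
  set μ := volume.restrict (Function.support ρ)
  have hpos : ∀ᵐ x ∂μ, 0 < ρ x :=
    ae_restrict_of_forall_mem (measurableSet_support hmeas) fun x hx => (hnn x).lt_of_ne' hx
  have hmass : ∫ x, ρ x ^ (1 : ℝ) ∂μ = 1 := by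
    simp only [Real.rpow_one]
    rw [setIntegral_eq_integral_of_forall_compl_eq_zero fun x hx => Function.notMem_support.1 hx]
    exact htot
  have : NeZero μ := ⟨fun h => by simp [h] at hmass⟩
  have hF := convexOn_log_integral_rpow hmeas.aemeasurable hpos
  set D := {s : ℝ | Integrable (fun x => ρ x ^ s) μ}
  set F := fun s : ℝ => Real.log (∫ x, ρ x ^ s ∂μ)
  have hF1 : F 1 = 0 := by simp only [F, hmass, Real.log_one]
  have hGF : G = escortLogComplexity F (p - 1) (q - 1) := funext fun α => by
    rw [hG, hW, hW, escortLogComplexity_eq (sub_ne_zero.2 hp) (sub_ne_zero.2 hq) hF1]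
  have hSD : ∀ α ∈ S, 1 + α * (p - 1) ∈ D ∧ 1 + α * (q - 1) ∈ D :=
    hS ▸ fun α hα => ⟨hα.1, hα.2.2.1⟩
  have h0 : escortLogComplexity F (p - 1) (q - 1) 0 = 0 := by simp [escortLogComplexity, hF1]
  have h1D : (1 : ℝ) ∈ D := Integrable.of_integral_ne_zero (by rw [hmass]; exact one_ne_zero)
  have h1 : (1 : ℝ) + 0 * (p - 1) ∈ D ∧ (1 : ℝ) + 0 * (q - 1) ∈ D := by
    simpa only [zero_mul, add_zero] using And.intro h1D h1D
  have hab : p - 1 < q - 1 := by linarith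
  have hmono := hF.monotoneOn_escortLogComplexity hab (sub_ne_zero.2 hp) (sub_ne_zero.2 hq)
  have hanti := hF.antitoneOn_escortLogComplexity hab (sub_ne_zero.2 hp) (sub_ne_zero.2 hq)
  subst hGF
  refine ⟨fun α hα hα0 => h0 ▸ hmono ⟨le_rfl, h1⟩ ⟨hα0.le, hSD α hα⟩ hα0.le,
    fun α hα α' hα' hα0 hle =>
      hmono ⟨hα0.le, hSD α hα⟩ ⟨hα0.le.trans hle, hSD α' hα'⟩ hle,
    fun α hα hα0 => h0 ▸ hanti ⟨hα0.le, hSD α hα⟩ ⟨le_rfl, h1⟩ hα0.le,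
    fun α hα α' hα' hα0 hle =>
      hanti ⟨hle.trans hα0.le, hSD α' hα'⟩ ⟨hα0.le, hSD α hα⟩ hle⟩
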